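/- If every positive cone of a finitely generated group G fails to be coarsely connected in the Cayley graph (for instance if G has the Hucha property), then no positive cone of G is finitely generated as a sub-semigroup, and no positive cone of G is the evaluation of a regular language over a finite generating set. -/

import Mathlib

open scoped Pointwise

/-- A positive cone of a group `G`: a subsemigroup `P` such that
`G = P ⊔ P⁻¹ ⊔ {1}` (disjoint union). -/
def IsPositiveCone {G : Type*} [Group G] (P : Set G) : Prop :=
  (∀ a ∈ P, ∀ b ∈ P, a * b ∈ P) ∧
  (∀ g : G, g ∈ P ∨ g⁻¹ ∈ P ∨ g = 1) ∧
  (∀ g ∈ P, g⁻¹ ∉ P) ∧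
  (1 : G) ∉ P

/-- Word length of `g` with respect to the generating set `X`. -/
noncomputable def wordLength {G : Type*} [Group G] (X : Set G) (g : G) : ℕ :=
  sInf {n | ∃ l : List G, (∀ x ∈ l, x ∈ X) ∧ l.length = n ∧ l.prod = g}

/-- Word metric on `G` with respect to `X`. -/
noncomputable def wordDist {G : Type*} [Group G] (X : Set G) (g h : G) : ℕ :=
  wordLength X (g⁻¹ * h)

/-- An `r`-path from `a` to `b` supported in `S` (consecutive word-metric
distances at most `r`). -/
def IsRPath {G : Type*} [Group G] (X : Set G) (r : ℕ) (S : Set G) (a b : G) : Prop :=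
  ∃ l : List G, l ≠ [] ∧ l.head? = some a ∧ l.getLast? = some b ∧
    (∀ x ∈ l, x ∈ S) ∧ l.Chain' (fun u v => wordDist X u v ≤ r)

/-- `S` is `r`-coarsely connected in the Cayley graph `Γ(G,X)`. -/
def CoarselyConnectedWith {G : Type*} [Group G] (X : Set G) (r : ℕ) (S : Set G) : Prop :=
  ∀ a ∈ S, ∀ b ∈ S, IsRPath X r S a b

/-- `X` is a finite symmetric generating set of `G`. -/
def IsGenSet {G : Type*} [Group G] (X : Set G) : Prop :=
  X.Finite ∧ (∀ x ∈ X, x⁻¹ ∈ X) ∧ Subgroup.closure X = ⊤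

/-- A positive cone on a subset `K` of `G` (used for subgroups such as kernels). -/
def IsPositiveConeOn {G : Type*} [Group G] (K P : Set G) : Prop :=
  P ⊆ K ∧ (∀ a ∈ P, ∀ b ∈ P, a * b ∈ P) ∧ (∀ g ∈ K, g ∈ P ∨ g⁻¹ ∈ P ∨ g = 1) ∧
  (∀ g ∈ P, g⁻¹ ∉ P) ∧ (1 : G) ∉ P

/-- The sub-semigroup generated by `S`: nonempty products of elements of `S`. -/
def SemigroupClosure {G : Type*} [Group G] (S : Set G) : Set G :=
  {g | ∃ l : List G, l ≠ [] ∧ (∀ x ∈ l, x ∈ S) ∧ l.prod = g}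

/-!
Let `P = ev(𝓛)` with `𝓛` recognised by a finite automaton over a finite alphabet `Y ⊆ G`. By
finiteness there is `K` such that every state from which an accepting state can still be reached
admits an accepted continuation of word length at most `K`. Along an accepted word `y₁ ⋯ yₙ`, the
points `y₁ ⋯ yᵢ · cᵢ`, with `cᵢ` such a short continuation of the state reached after `i` letters
(and `cₙ` empty), lie in `P`, start within `2K` of a fixed base point, end at `y₁ ⋯ yₙ`, and
consecutive ones are at distance at most `2K + max_{y ∈ Y} |y|`. Hence `P` is coarsely connected.
A finitely generated semigroup is the evaluation of the regular language of nonempty words.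
-/

section WordLength

variable {G : Type*} [Group G] {X : Set G}

lemma exists_list_prod_eq (hX : IsGenSet X) (g : G) :
    ∃ l : List G, (∀ x ∈ l, x ∈ X) ∧ l.prod = g := by
  have hg : g ∈ (Subgroup.closure X).toSubmonoid := by
    rw [hX.2.2]; trivial
  rw [Subgroup.closure_toSubmonoid] at hg
  obtain ⟨l, hl, hp⟩ := Submonoid.exists_list_of_mem_closure hg
  refine ⟨l, fun x hx => ?_, hp⟩
  rcases hl x hx with h | h
  · exact h
  · simpa using hX.2.1 _ h

lemma wordLength_le {g : G} {l : List G} (hl : ∀ x ∈ l, x ∈ X) (hp : l.prod = g) :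
    wordLength X g ≤ l.length :=
  Nat.sInf_le ⟨l, hl, rfl, hp⟩

lemma exists_list_length_eq_wordLength (hX : IsGenSet X) (g : G) :
    ∃ l : List G, (∀ x ∈ l, x ∈ X) ∧ l.length = wordLength X g ∧ l.prod = g := by
  obtain ⟨l, hl, hp⟩ := exists_list_prod_eq hX g
  exact Nat.sInf_mem (s := {n | ∃ l : List G, (∀ x ∈ l, x ∈ X) ∧ l.length = n ∧ l.prod = g})
    ⟨l.length, l, hl, rfl, hp⟩

lemma wordLength_one : wordLength X (1 : G) = 0 :=
  Nat.le_zero.mp (wordLength_le (l := []) (by simp) rfl)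

lemma wordLength_mul_le (hX : IsGenSet X) (g h : G) :
    wordLength X (g * h) ≤ wordLength X g + wordLength X h := by
  obtain ⟨l₁, hl₁, hlen₁, rfl⟩ := exists_list_length_eq_wordLength hX g
  obtain ⟨l₂, hl₂, hlen₂, rfl⟩ := exists_list_length_eq_wordLength hX h
  rw [← hlen₁, ← hlen₂, ← List.length_append, ← List.prod_append]
  exact wordLength_le (fun x hx => (List.mem_append.mp hx).elim (hl₁ x) (hl₂ x)) rfl

lemma wordLength_inv_le (hX : IsGenSet X) (g : G) : wordLength X g⁻¹ ≤ wordLength X g := by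
  obtain ⟨l, hl, hlen, rfl⟩ := exists_list_length_eq_wordLength hX g
  rw [← hlen, ← List.length_map (f := fun x => x⁻¹), ← List.length_reverse]
  refine wordLength_le ?_ (List.prod_inv_reverse l).symm
  simp only [List.mem_map, List.mem_reverse]
  rintro _ ⟨x, hx, rfl⟩
  exact hX.2.1 x (hl x hx)

lemma wordLength_inv (hX : IsGenSet X) (g : G) : wordLength X g⁻¹ = wordLength X g :=
  le_antisymm (wordLength_inv_le hX g) (by simpa using wordLength_inv_le hX g⁻¹)

lemma wordDist_self (g : G) : wordDist X g g = 0 := by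
  simp [wordDist, wordLength_one]

lemma wordDist_comm (hX : IsGenSet X) (g h : G) : wordDist X g h = wordDist X h g := by
  rw [wordDist, wordDist, ← wordLength_inv hX, mul_inv_rev, inv_inv]

lemma wordDist_mul_left (g a b : G) : wordDist X (g * a) (g * b) = wordDist X a b := by
  simp [wordDist, mul_assoc]

lemma wordDist_le_wordLength_add (hX : IsGenSet X) (g h : G) :
    wordDist X g h ≤ wordLength X g + wordLength X h :=
  (wordLength_mul_le hX g⁻¹ h).trans_eq (by rw [wordLength_inv hX])

end WordLength

namespace IsRPath

variable {G : Type*} [Group G] {X : Set G} {r : ℕ} {S : Set G} {a b c : G}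

lemma refl (ha : a ∈ S) : IsRPath X r S a a :=
  ⟨[a], by simp, rfl, rfl, by simpa, List.isChain_singleton a⟩

lemma mem_right (h : IsRPath X r S a b) : b ∈ S := by
  obtain ⟨l, -, -, hl, hmem, -⟩ := h
  exact hmem b (List.mem_of_mem_getLast? hl)

lemma symm (hX : IsGenSet X) (h : IsRPath X r S a b) : IsRPath X r S b a := by
  obtain ⟨l, hne, hh, hl, hmem, hch⟩ := h
  refine ⟨l.reverse, by simpa, by simpa [List.head?_reverse], by simpa [List.getLast?_reverse],
    by simpa using hmem, List.isChain_reverse.mpr (hch.imp fun u v huv => ?_)⟩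
  rwa [wordDist_comm hX]

lemma trans (h₁ : IsRPath X r S a b) (h₂ : IsRPath X r S b c) : IsRPath X r S a c := by
  obtain ⟨l₁, hne₁, hh₁, hl₁, hmem₁, hch₁⟩ := h₁
  obtain ⟨l₂, hne₂, hh₂, hl₂, hmem₂, hch₂⟩ := h₂
  refine ⟨l₁ ++ l₂, by simp [hne₁], by rwa [List.head?_append_of_ne_nil _ hne₁],
    by rwa [List.getLast?_append_of_ne_nil _ hne₂],
    fun x hx => (List.mem_append.mp hx).elim (hmem₁ x) (hmem₂ x),
    List.isChain_append.mpr ⟨hch₁, hch₂, ?_⟩⟩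
  rintro x hx y hy
  rw [hl₁, Option.mem_some_iff] at hx
  rw [hh₂, Option.mem_some_iff] at hy
  subst hx hy
  simp [wordDist_self]

lemma extend (h : IsRPath X r S a b) (hc : c ∈ S) (hd : wordDist X b c ≤ r) :
    IsRPath X r S a c :=
  h.trans ⟨[b, c], by simp, rfl, rfl, by simp [h.mem_right, hc],
    List.isChain_pair.mpr hd⟩

end IsRPath

section Automata

variable {α σ : Type*}

def IsAcceptedFrom (M : DFA α σ) (Y : Set α) (q : σ) (w : List α) : Prop :=
  (∀ x ∈ w, x ∈ Y) ∧ w ∈ M.acceptsFrom q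

lemma IsAcceptedFrom.cons {M : DFA α σ} {Y : Set α} {q : σ} {y : α} {w : List α} (hy : y ∈ Y)
    (h : IsAcceptedFrom M Y (M.step q y) w) : IsAcceptedFrom M Y q (y :: w) :=
  ⟨List.forall_mem_cons.mpr ⟨hy, h.1⟩, h.2⟩

lemma eventually_forall_exists_isAcceptedFrom_le [Finite σ] (M : DFA α σ) (Y : Set α)
    (f : List α → ℕ) :
    ∀ᶠ K in Filter.atTop, ∀ q w, IsAcceptedFrom M Y q w →
      ∃ w', IsAcceptedFrom M Y q w' ∧ f w' ≤ K := by
  refine Filter.eventually_all.mpr fun q => ?_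
  by_cases h : ∃ w, IsAcceptedFrom M Y q w
  · obtain ⟨w, hw⟩ := h
    exact (Filter.eventually_ge_atTop (f w)).mono fun K hK _ _ => ⟨w, hw, hK⟩
  · exact .of_forall fun K w hw => absurd ⟨w, hw⟩ h

def nonemptyWordsDFA (α : Type*) : DFA α Bool :=
  ⟨fun _ _ => true, false, {true}⟩

lemma mem_accepts_nonemptyWordsDFA {l : List α} :
    l ∈ (nonemptyWordsDFA α).accepts ↔ l ≠ [] := by
  cases l with
  | nil => simp [DFA.mem_accepts, DFA.eval_nil, nonemptyWordsDFA]
  | cons a l =>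
    simp [DFA.mem_accepts, DFA.eval, DFA.evalFrom, nonemptyWordsDFA, List.foldl_fixed']

end Automata

section AcceptedProducts

variable {G σ : Type*} [Group G] {X : Set G} (M : DFA G σ) (Y : Set G)

def acceptedProducts : Set G :=
  {g | ∃ l : List G, (∀ x ∈ l, x ∈ Y) ∧ l ∈ M.accepts ∧ l.prod = g}

lemma acceptedProducts_nonemptyWordsDFA :
    acceptedProducts (nonemptyWordsDFA G) Y = SemigroupClosure Y := by
  ext g
  simp only [acceptedProducts, SemigroupClosure, mem_accepts_nonemptyWordsDFA, Set.mem_ofPred_eq]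
  exact exists_congr fun l => by tauto

variable {M Y}

lemma mul_prod_mem_acceptedProducts {u w : List G} (hu : ∀ x ∈ u, x ∈ Y)
    (hw : IsAcceptedFrom M Y (M.eval u) w) : u.prod * w.prod ∈ acceptedProducts M Y :=
  ⟨u ++ w, fun x hx => (List.mem_append.mp hx).elim (hu x) (hw.1 x),
    by rw [DFA.mem_accepts, DFA.eval, DFA.evalFrom_of_append]; exact hw.2, List.prod_append⟩

lemma isRPath_mul_prod (hX : IsGenSet X) {m K : ℕ} (hm : ∀ y ∈ Y, wordLength X y ≤ m)
    (hK : ∀ q w, IsAcceptedFrom M Y q w →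
      ∃ w', IsAcceptedFrom M Y q w' ∧ wordLength X w'.prod ≤ K)
    {w₀ : List G} (hw₀ : IsAcceptedFrom M Y M.start w₀) (hw₀K : wordLength X w₀.prod ≤ K)
    {u : List G} (hu : ∀ x ∈ u, x ∈ Y) {w : List G} (hw : IsAcceptedFrom M Y (M.eval u) w)
    (hwK : wordLength X w.prod ≤ K) :
    IsRPath X (K + (m + K)) (acceptedProducts M Y) w₀.prod (u.prod * w.prod) := by
  induction u using List.reverseRecOn generalizing w with
  | nil =>
    have hw₀Q := mul_prod_mem_acceptedProducts (u := []) (by simp) hw₀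
    rw [List.prod_nil, one_mul] at hw₀Q ⊢
    refine (IsRPath.refl hw₀Q).extend (by simpa using mul_prod_mem_acceptedProducts hu hw) ?_
    calc wordDist X w₀.prod w.prod ≤ K + K :=
          (wordDist_le_wordLength_add hX _ _).trans (add_le_add hw₀K hwK)
      _ ≤ K + (m + K) := by omega
  | append_singleton u y ih =>
    have hy : y ∈ Y := hu y (by simp)
    have hend := mul_prod_mem_acceptedProducts hu hw
    rw [DFA.eval_append_singleton] at hw
    obtain ⟨w', hw', hw'K⟩ := hK _ _ (hw.cons hy)
    refine (ih (fun x hx => hu x (by simp [hx])) hw' hw'K).extend hend ?_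
    rw [List.prod_append, List.prod_singleton, mul_assoc, wordDist_mul_left]
    calc wordDist X w'.prod (y * w.prod) ≤ K + wordLength X (y * w.prod) :=
          (wordDist_le_wordLength_add hX _ _).trans (Nat.add_le_add_right hw'K _)
      _ ≤ K + (m + K) :=
          Nat.add_le_add_left ((wordLength_mul_le hX _ _).trans (add_le_add (hm y hy) hwK)) _

theorem exists_coarselyConnectedWith_acceptedProducts [Finite σ] (hX : IsGenSet X)
    (hY : Y.Finite) (M : DFA G σ) :
    ∃ r, 1 ≤ r ∧ CoarselyConnectedWith X r (acceptedProducts M Y) := by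
  obtain ⟨m, hm⟩ := (hY.image (wordLength X)).bddAbove
  obtain ⟨K, hK, hK₁⟩ := ((eventually_forall_exists_isAcceptedFrom_le M Y
    (fun w => wordLength X w.prod)).and (Filter.eventually_ge_atTop 1)).exists
  have hpath : ∀ {w₀}, IsAcceptedFrom M Y M.start w₀ → wordLength X w₀.prod ≤ K →
      ∀ g ∈ acceptedProducts M Y, IsRPath X (K + (m + K)) (acceptedProducts M Y) w₀.prod g := by
    rintro w₀ hw₀ hw₀K _ ⟨u, hu, hacc, rfl⟩
    simpa using isRPath_mul_prod hX (fun y hy => hm (Set.mem_image_of_mem _ hy)) hK hw₀ hw₀K hu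
      (w := []) ⟨by simp, hacc⟩ (by simp [wordLength_one])
  refine ⟨K + (m + K), by omega, fun a ha b hb => ?_⟩
  have ⟨u, hu, hacc, _⟩ := ha
  obtain ⟨w₀, hw₀, hw₀K⟩ := hK _ _ ⟨hu, hacc⟩
  exact ((hpath hw₀ hw₀K a ha).symm hX).trans (hpath hw₀ hw₀K b hb)

end AcceptedProducts

/-- if no positive cone of `G` is coarsely connected, then no
positive cone is finitely generated as a sub-semigroup, and no positive cone
is the evaluation of a regular language over a finite symmetric generating
set. -/
theorem stmt_19 {G : Type*} [Group G] (X : Set G) (hX : IsGenSet X)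
    (hncc : ∀ P : Set G, IsPositiveCone P →
      ∀ r : ℕ, 1 ≤ r → ¬ CoarselyConnectedWith X r P) :
    ∀ P : Set G, IsPositiveCone P →
      (¬ ∃ S : Finset G, P = SemigroupClosure (S : Set G)) ∧
      (¬ ∃ (Y : Set G) (_ : IsGenSet Y) (σ : Type) (_ : Fintype σ)
          (τ : σ → G → σ) (s0 : σ) (acc : Set σ),
          P = {g : G | ∃ l : List G, (∀ x ∈ l, x ∈ Y) ∧
            List.foldl τ s0 l ∈ acc ∧ l.prod = g}) := by
  intro P hP
  have ne_acceptedProducts : ∀ (Y : Set G) (σ : Type) [Finite σ] (M : DFA G σ),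
      Y.Finite → P ≠ acceptedProducts M Y := by
    rintro Y σ _ M hY rfl
    obtain ⟨r, hr, hcc⟩ := exists_coarselyConnectedWith_acceptedProducts hX hY M
    exact hncc _ hP r hr hcc
  refine ⟨?_, ?_⟩
  · rintro ⟨S, hS⟩
    exact ne_acceptedProducts S Bool (nonemptyWordsDFA G) S.finite_toSet
      (hS.trans (acceptedProducts_nonemptyWordsDFA _).symm)
  · rintro ⟨Y, hY, σ, _, τ, s0, acc, hPY⟩
    exact ne_acceptedProducts Y σ ⟨τ, s0, acc⟩ hY.1 hPY
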